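/- arXiv:2310.13597 — 3 statements merged into one kernel-verified Lean document; each statement's English description precedes it below -/
import Mathlib

section
/- Let $P_1, \dots, P_m$ be orthogonal projection operators on a finite-dimensional complex inner product space, and let $A = \frac{1}{m}\sum_{i=1}^m P_i$. If $\|P_i P_j\|_{op} \le \varepsilon$ for all $i \ne j$, then $\|A\|_{op} \le \frac{1}{m} + \sqrt{\varepsilon}$. -/
/-!
For `T = ∑ Pᵢ` and a vector `x`, expanding `‖T x‖²` gives the diagonal part
`∑ ‖Pᵢ x‖² = re ⟪T x, x⟫ ≤ ‖T x‖ ‖x‖` plus at most `m²` cross terms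
`⟪Pᵢ x, Pⱼ x⟫ = ⟪x, Pᵢ Pⱼ x⟫`, each of size at most `ε ‖x‖²`. The quadratic inequality
`‖T x‖² ≤ ‖T x‖ ‖x‖ + m² ε ‖x‖²` then forces `‖T x‖ ≤ (1 + m √ε) ‖x‖`.
-/

open scoped InnerProductSpace

lemma le_one_add_mul_of_sq_le {t s a : ℝ} (hs : 0 ≤ s) (ha : 0 ≤ a)
    (h : t ^ 2 ≤ t * s + a ^ 2 * s ^ 2) : t ≤ (1 + a) * s := by
  by_contra! hlt
  have ht : 0 < t := (by positivity : 0 ≤ (1 + a) * s).trans_lt hlt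
  nlinarith [mul_lt_mul_of_pos_left hlt ht,
    mul_le_mul_of_nonneg_left hlt.le (by positivity : 0 ≤ a * s)]

section InnerProductSpace

variable {𝕜 F : Type*} [RCLike 𝕜] [NormedAddCommGroup F] [InnerProductSpace 𝕜 F]

lemma norm_sum_sq_le_of_norm_inner_le {ι : Type*} [Fintype ι] [DecidableEq ι] (v : ι → F)
    {c : ℝ} (hc : 0 ≤ c)
    (h : ∀ i j, i ≠ j → ‖⟪v i, v j⟫_𝕜‖ ≤ c) :
    ‖∑ i, v i‖ ^ 2 ≤ ∑ i, ‖v i‖ ^ 2 + Fintype.card ι ^ 2 * c := by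
  have row (i : ι) : ∑ j, RCLike.re ⟪v i, v j⟫_𝕜 ≤ ‖v i‖ ^ 2 + Fintype.card ι * c := by
    rw [← Finset.add_sum_erase _ _ (Finset.mem_univ i), inner_self_eq_norm_sq]
    gcongr
    calc ∑ j ∈ Finset.univ.erase i, RCLike.re ⟪v i, v j⟫_𝕜
        ≤ ∑ j ∈ Finset.univ.erase i, c := Finset.sum_le_sum fun j hj =>
          (RCLike.re_le_norm _).trans (h i j (Finset.ne_of_mem_erase hj).symm)
      _ ≤ Fintype.card ι * c := by
          rw [Finset.sum_const, nsmul_eq_mul]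
          gcongr
          exact_mod_cast (Finset.card_erase_le).trans_eq Finset.card_univ
  calc ‖∑ i, v i‖ ^ 2 = ∑ i, ∑ j, RCLike.re ⟪v i, v j⟫_𝕜 := by
        rw [← inner_self_eq_norm_sq (𝕜 := 𝕜), sum_inner]
        simp only [inner_sum, map_sum]
    _ ≤ ∑ i, (‖v i‖ ^ 2 + Fintype.card ι * c) := Finset.sum_le_sum fun i _ => row i
    _ = ∑ i, ‖v i‖ ^ 2 + Fintype.card ι ^ 2 * c := by
        rw [Finset.sum_add_distrib, Finset.sum_const, Finset.card_univ, nsmul_eq_mul]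
        ring

variable [CompleteSpace F]

lemma IsStarProjection.re_inner_apply_self {P : F →L[𝕜] F} (hP : IsStarProjection P) (x : F) :
    RCLike.re ⟪P x, x⟫_𝕜 = ‖P x‖ ^ 2 := by
  have hPPx : P (P x) = P x := congr($hP.isIdempotentElem.eq x)
  calc RCLike.re ⟪P x, x⟫_𝕜 = RCLike.re ⟪P x, P x⟫_𝕜 := by
        nth_rw 1 [← hPPx]; exact congrArg _ (hP.isSelfAdjoint.isSymmetric (P x) x)
    _ = ‖P x‖ ^ 2 := inner_self_eq_norm_sq _

lemma IsSelfAdjoint.norm_inner_apply_apply_le {P : F →L[𝕜] F} (hP : IsSelfAdjoint P)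
    (Q : F →L[𝕜] F) (x : F) : ‖⟪P x, Q x⟫_𝕜‖ ≤ ‖P ∘L Q‖ * ‖x‖ ^ 2 := by
  calc ‖⟪P x, Q x⟫_𝕜‖ = ‖⟪x, (P ∘L Q) x⟫_𝕜‖ := congrArg _ (hP.isSymmetric x (Q x))
    _ ≤ ‖x‖ * ‖(P ∘L Q) x‖ := norm_inner_le_norm _ _
    _ ≤ ‖x‖ * (‖P ∘L Q‖ * ‖x‖) := by gcongr; exact (P ∘L Q).le_opNorm x
    _ = ‖P ∘L Q‖ * ‖x‖ ^ 2 := by ring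

lemma norm_sum_le_one_add_card_mul_of_isStarProjection {ι : Type*} [Fintype ι]
    {P : ι → F →L[𝕜] F} (hP : ∀ i, IsStarProjection (P i)) {δ : ℝ} (hδ : 0 ≤ δ)
    (h : ∀ i j, i ≠ j → ‖P i ∘L P j‖ ≤ δ ^ 2) :
    ‖∑ i, P i‖ ≤ 1 + Fintype.card ι * δ := by
  classical
  refine ContinuousLinearMap.opNorm_le_bound _ (by positivity) fun x => ?_
  have hdiag : ∑ i, ‖P i x‖ ^ 2 ≤ ‖(∑ i, P i) x‖ * ‖x‖ :=
    calc ∑ i, ‖P i x‖ ^ 2 = RCLike.re ⟪(∑ i, P i) x, x⟫_𝕜 := by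
          simp only [sum_apply, sum_inner, map_sum, (hP _).re_inner_apply_self]
      _ ≤ ‖(∑ i, P i) x‖ * ‖x‖ := (RCLike.re_le_norm _).trans (norm_inner_le_norm _ _)
  have hoff (i j : ι) (hij : i ≠ j) : ‖⟪P i x, P j x⟫_𝕜‖ ≤ δ ^ 2 * ‖x‖ ^ 2 :=
    ((hP i).isSelfAdjoint.norm_inner_apply_apply_le _ x).trans (by gcongr; exact h i j hij)
  have hsum := norm_sum_sq_le_of_norm_inner_le (fun i => P i x) (by positivity) hoff
  rw [← sum_apply] at hsum
  refine le_one_add_mul_of_sq_le (norm_nonneg x) (by positivity) ?_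
  linear_combination hsum + hdiag

end InnerProductSpace

theorem stmt0_general {E : Type*} [NormedAddCommGroup E] [InnerProductSpace ℂ E]
    [FiniteDimensional ℂ E] (m : ℕ) (P : Fin m → E →L[ℂ] E)
    (hproj : ∀ i, IsSelfAdjoint (P i) ∧ (P i) ∘L (P i) = P i)
    (ε : ℝ)
    (hPP : ∀ i j, i ≠ j → ‖(P i) ∘L (P j)‖ ≤ ε) :
    ‖(m : ℝ)⁻¹ • ∑ i, P i‖ ≤ (m : ℝ)⁻¹ + Real.sqrt ε := by
  have hPP' (i j : Fin m) (hij : i ≠ j) : ‖P i ∘L P j‖ ≤ √ε ^ 2 :=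
    (hPP i j hij).trans (Real.sq_sqrt' ▸ le_max_left ε 0)
  have hsum := norm_sum_le_one_add_card_mul_of_isStarProjection
    (fun i => ⟨(hproj i).2, (hproj i).1⟩) (Real.sqrt_nonneg ε) hPP'
  rw [Fintype.card_fin] at hsum
  calc ‖(m : ℝ)⁻¹ • ∑ i, P i‖ = (m : ℝ)⁻¹ * ‖∑ i, P i‖ := by
        rw [norm_smul, Real.norm_of_nonneg (by positivity)]
    _ ≤ (m : ℝ)⁻¹ * (1 + m * √ε) := by gcongr
    _ = (m : ℝ)⁻¹ + ((m : ℝ)⁻¹ * m) * √ε := by ring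
    _ ≤ (m : ℝ)⁻¹ + √ε := by
        gcongr
        exact mul_le_of_le_one_left (Real.sqrt_nonneg ε) inv_mul_le_one

/-- If `P₁, …, Pₘ` are orthogonal projections on a finite-dimensional complex inner
product space with `‖Pᵢ Pⱼ‖ ≤ ε` for all `i ≠ j`, then the average `A = (1/m) ∑ Pᵢ`
satisfies `‖A‖ ≤ 1/m + √ε`. -/
theorem stmt0 {E : Type*} [NormedAddCommGroup E] [InnerProductSpace ℂ E]
    [FiniteDimensional ℂ E] (m : ℕ) (hm : 0 < m) (P : Fin m → E →L[ℂ] E)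
    (hproj : ∀ i, IsSelfAdjoint (P i) ∧ (P i) ∘L (P i) = P i)
    (ε : ℝ)
    (hPP : ∀ i j, i ≠ j → ‖(P i) ∘L (P j)‖ ≤ ε) :
    ‖(m : ℝ)⁻¹ • ∑ i, P i‖ ≤ (m : ℝ)⁻¹ + Real.sqrt ε :=
  stmt0_general m P hproj ε hPP
end

section
/- Let $M_0$ be the perfect matching $\{\{1,k+1\},\{2,k+2\},\dots,\{k,2k\}\}$ on $[2k]$, and for an indeterminate (or real) $D$ consider the sum over all perfect matchings $M$ of $[2k]$ of $D^{\mathrm{cc}(M \cup M_0)}$, where $\mathrm{cc}$ denotes the number of connected components of the multigraph with edge set $M \sqcup M_0$ on vertex set $[2k]$. Then this sum equals $(D+2k-2)(D+2k-4)\cdots(D+2)D$. -/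
/-!
Encode a perfect matching of a finite set `Y` by its fixed-point-free involution, and write
`S(σ)` for the sum over matchings `f` of `D ^ cc(f ∪ σ)`. Fix a point `v`, let `u = σ v`, and sort
the matchings `f` by the partner `a = f v`. If `a = u`, then `{v, u}` is a component of `f ∪ σ`
and deleting it leaves an arbitrary matching of `Y \ {v, u}` with one component less: this
contributes `D * S(σ|_{Y \ {v, u}})`. If `a ≠ u`, let `c = f u`; contracting the path
`a – v – u – c` to the single edge `a – c` gives a matching of `Y \ {v, u}` with the same
components, and for each of the `|Y| - 2` choices of `a` this is a bijection. Hence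
`S(σ) = (D + |Y| - 2) * S(σ|_{Y \ {v, u}})`, and induction on `|Y| / 2` gives the product.
-/

open Finset Equiv Function

namespace SimpleGraph

variable {V β : Type*} {G : SimpleGraph V}

theorem card_connectedComponent_eq_of_section (φ : V → β) (ρ : β → V)
    (hφ : ∀ x y, G.Reachable x y → φ x = φ y) (hρ : ∀ x, G.Reachable (ρ (φ x)) x)
    (hφρ : ∀ b, φ (ρ b) = b) : Nat.card G.ConnectedComponent = Nat.card β := by
  refine Nat.card_congr <| Equiv.ofBijective (Quot.lift φ hφ)
    ⟨?_, fun b => ⟨G.connectedComponentMk (ρ b), hφρ b⟩⟩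
  refine ConnectedComponent.ind₂ fun x y h => ConnectedComponent.sound ?_
  have h : ρ (φ x) = ρ (φ y) := congrArg ρ h
  exact (hρ x).symm.trans (h ▸ hρ y)

end SimpleGraph

namespace Equiv.Perm

open SimpleGraph (ConnectedComponent)

variable {Y : Type*}

def IsPerfectMatching (f : Perm Y) : Prop := (∀ x, f (f x) = x) ∧ ∀ x, f x ≠ x

instance [Fintype Y] [DecidableEq Y] : DecidablePred (IsPerfectMatching (Y := Y)) :=
  fun f => inferInstanceAs (Decidable ((∀ x, f (f x) = x) ∧ ∀ x, f x ≠ x))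

theorem IsPerfectMatching.conj {f : Perm Y} (hf : IsPerfectMatching f) (τ : Perm Y) :
    IsPerfectMatching (τ * f * τ⁻¹) :=
  ⟨fun x => by simp [hf.1], fun x hx => hf.2 (τ⁻¹ x) (by simpa [← eq_symm_apply] using hx)⟩

theorem isPerfectMatching_conj_iff {f : Perm Y} (τ : Perm Y) :
    IsPerfectMatching (τ * f * τ⁻¹) ↔ IsPerfectMatching f :=
  ⟨fun h => by simpa [mul_assoc] using h.conj τ⁻¹, fun h => h.conj τ⟩

theorem IsPerfectMatching.subtypePerm {σ : Perm Y} (hσ : IsPerfectMatching σ) {p : Y → Prop}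
    (h : ∀ x, p (σ x) ↔ p x) : IsPerfectMatching (σ.subtypePerm h) :=
  ⟨fun w => Subtype.ext (hσ.1 w), fun w hw => hσ.2 w (congrArg Subtype.val hw)⟩

def unionGraph (f σ : Perm Y) : SimpleGraph Y :=
  SimpleGraph.fromRel fun x y => f x = y ∨ σ x = y

section unionGraph

variable {f σ : Perm Y}

theorem unionGraph_reachable_of_left {x y : Y} (h : f x = y) :
    (unionGraph f σ).Reachable x y := by
  by_cases hxy : x = y
  · rw [hxy]
  · exact SimpleGraph.Adj.reachable ⟨hxy, .inl (.inl h)⟩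

theorem unionGraph_reachable_of_right {x y : Y} (h : σ x = y) :
    (unionGraph f σ).Reachable x y := by
  by_cases hxy : x = y
  · rw [hxy]
  · exact SimpleGraph.Adj.reachable ⟨hxy, .inl (.inr h)⟩

theorem reachable_of_unionGraph_reachable {Z : Type*} {K : SimpleGraph Z} (ψ : Y → Z)
    (hf : ∀ x, K.Reachable (ψ x) (ψ (f x))) (hσ : ∀ x, K.Reachable (ψ x) (ψ (σ x))) {x y : Y}
    (h : (unionGraph f σ).Reachable x y) : K.Reachable (ψ x) (ψ y) := by
  rw [SimpleGraph.reachable_iff_reflTransGen] at h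
  induction h with
  | refl => rfl
  | tail _ hadj ih =>
    refine ih.trans ?_
    rcases hadj.2 with (rfl | rfl) | (rfl | rfl)
    exacts [hf _, hσ _, (hf _).symm, (hσ _).symm]

theorem apply_eq_of_unionGraph_reachable {β : Type*} (φ : Y → β) (hf : ∀ x, φ (f x) = φ x)
    (hσ : ∀ x, φ (σ x) = φ x) {x y : Y} (h : (unionGraph f σ).Reachable x y) : φ x = φ y :=
  SimpleGraph.reachable_bot.1 <|
    reachable_of_unionGraph_reachable (K := ⊥) φ (fun x => by rw [hf]) (fun x => by rw [hσ]) h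

end unionGraph

section addPair

variable {v u : Y}

theorem apply_ne_and_ne_iff {h : Perm Y} (hh : ∀ x, h (h x) = x) (hvu : h v = u) (x : Y) :
    h x ≠ v ∧ h x ≠ u ↔ x ≠ v ∧ x ≠ u := by
  have huv : h u = v := by rw [← hvu, hh]
  have hv : h x ≠ v ↔ x ≠ u := by rw [← huv, h.injective.ne_iff]
  have hu : h x ≠ u ↔ x ≠ v := by rw [← hvu, h.injective.ne_iff]
  rw [hv, hu, and_comm]

theorem eq_or_eq_or_exists_coe (x : Y) :
    x = v ∨ x = u ∨ ∃ w : {x // x ≠ v ∧ x ≠ u}, ↑w = x := by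
  by_cases hv : x = v
  · exact .inl hv
  by_cases hu : x = u
  · exact .inr (.inl hu)
  exact .inr (.inr ⟨⟨x, hv, hu⟩, rfl⟩)

variable [DecidableEq Y]

variable (v u) in
def addPair (g : Perm {x // x ≠ v ∧ x ≠ u}) : Perm Y := ofSubtype g * swap v u

variable (g : Perm {x // x ≠ v ∧ x ≠ u})

@[simp] theorem addPair_apply_left : addPair v u g v = u := by
  simp [addPair, ofSubtype_apply_of_not_mem]

@[simp] theorem addPair_apply_right : addPair v u g u = v := by
  simp [addPair, ofSubtype_apply_of_not_mem]

@[simp] theorem addPair_apply_coe (x : {x // x ≠ v ∧ x ≠ u}) : addPair v u g x = g x := by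
  simp [addPair, swap_apply_of_ne_of_ne x.2.1 x.2.2, ofSubtype_apply_coe]

theorem isPerfectMatching_addPair_iff (hvu : v ≠ u) :
    IsPerfectMatching (addPair v u g) ↔ IsPerfectMatching g := by
  refine ⟨fun ⟨hinv, hfix⟩ => ⟨fun w => ?_, fun w hw => ?_⟩,
    fun ⟨hinv, hfix⟩ => ⟨fun x => ?_, fun x => ?_⟩⟩
  · exact Subtype.ext (by simpa using hinv w)
  · exact hfix w (by simp [hw])
  · rcases eq_or_eq_or_exists_coe (v := v) (u := u) x with rfl | rfl | ⟨w, rfl⟩ <;> simp [hinv]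
  · rcases eq_or_eq_or_exists_coe (v := v) (u := u) x with rfl | rfl | ⟨w, rfl⟩
    · simpa using hvu.symm
    · simpa using hvu
    · simpa [Subtype.ext_iff] using hfix w

theorem addPair_subtypePerm {h : Perm Y} (hh : ∀ x, h (h x) = x) (hvu : h v = u) :
    addPair v u (h.subtypePerm (apply_ne_and_ne_iff hh hvu)) = h := by
  ext x
  rcases eq_or_eq_or_exists_coe (v := v) (u := u) x with rfl | rfl | ⟨w, rfl⟩
  · simp [hvu]
  · rw [addPair_apply_right, ← hvu, hh]
  · simp

variable [Fintype Y] {M : Type*} [AddCommMonoid M]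

theorem sum_filter_apply_eq_sum_addPair (hvu : v ≠ u) (F : Perm Y → M) :
    ∑ h ∈ univ.filter (fun h => IsPerfectMatching h ∧ h v = u), F h
      = ∑ g ∈ univ.filter IsPerfectMatching, F (addPair v u g) := by
  symm
  refine sum_bij' (fun g _ => addPair v u g)
    (fun h hh => h.subtypePerm (apply_ne_and_ne_iff (mem_filter.1 hh).2.1.1 (mem_filter.1 hh).2.2))
    (fun g hg => ?_) (fun h hh => ?_) (fun g _ => ?_) (fun h hh => ?_) (fun _ _ => rfl)
  · simp_all [isPerfectMatching_addPair_iff g hvu]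
  · obtain ⟨hhm, hhv⟩ := (mem_filter.1 hh).2
    simpa using hhm.subtypePerm (apply_ne_and_ne_iff hhm.1 hhv)
  · ext; simp
  · exact addPair_subtypePerm (mem_filter.1 hh).2.1.1 (mem_filter.1 hh).2.2

theorem sum_filter_apply_eq_sum_conj (τ : Perm Y) (hτ : τ v = v) (a : Y) (F : Perm Y → M) :
    ∑ f ∈ univ.filter (fun f => IsPerfectMatching f ∧ f v = a), F f
      = ∑ h ∈ univ.filter (fun h => IsPerfectMatching h ∧ h v = τ a), F (τ⁻¹ * h * τ) := by
  refine sum_equiv (MulAut.conj τ).toEquiv (fun f => ?_) (fun f _ => by simp [mul_assoc])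
  have hτ' : τ.symm v = v := by rw [symm_apply_eq, hτ]
  simp [isPerfectMatching_conj_iff, hτ']

end addPair

section surgery

variable {v u : Y} {f σ : Perm Y} {g s : Perm {x // x ≠ v ∧ x ≠ u}}

theorem card_unionGraph_eq_add_one [Finite Y] (hfv : f v = u) (hfu : f u = v)
    (hfg : ∀ w : {x // x ≠ v ∧ x ≠ u}, f w = g w) (hσv : σ v = u) (hσu : σ u = v)
    (hs : ∀ w : {x // x ≠ v ∧ x ≠ u}, σ w = s w) :
    Nat.card (unionGraph f σ).ConnectedComponent
      = Nat.card (unionGraph g s).ConnectedComponent + 1 := by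
  classical
  set H := unionGraph g s
  let φ : Y → Option H.ConnectedComponent := fun x =>
    if hx : x ≠ v ∧ x ≠ u then some (H.connectedComponentMk ⟨x, hx⟩) else none
  have hφ_coe (w : {x // x ≠ v ∧ x ≠ u}) : φ w = some (H.connectedComponentMk w) := dif_pos w.2
  have hφv : φ v = none := dif_neg (by simp)
  have hφu : φ u = none := dif_neg (by simp)
  have hH {w w'} : H.Reachable w w' → (unionGraph f σ).Reachable w w' :=
    reachable_of_unionGraph_reachable Subtype.val (fun w => unionGraph_reachable_of_left (hfg w))
      (fun w => unionGraph_reachable_of_right (hs w))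
  rw [← Finite.card_option]
  refine SimpleGraph.card_connectedComponent_eq_of_section φ (Option.elim · v (fun c => c.out))
    (fun x y => apply_eq_of_unionGraph_reachable φ (fun x => ?_) (fun x => ?_)) (fun x => ?_) ?_
  · rcases eq_or_eq_or_exists_coe (v := v) (u := u) x with h | h | ⟨w, rfl⟩
    · rw [h, hfv, hφv, hφu]
    · rw [h, hfu, hφv, hφu]
    · rw [hfg, hφ_coe, hφ_coe, Option.some_inj, ConnectedComponent.eq]
      exact (unionGraph_reachable_of_left rfl).symm
  · rcases eq_or_eq_or_exists_coe (v := v) (u := u) x with h | h | ⟨w, rfl⟩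
    · rw [h, hσv, hφv, hφu]
    · rw [h, hσu, hφv, hφu]
    · rw [hs, hφ_coe, hφ_coe, Option.some_inj, ConnectedComponent.eq]
      exact (unionGraph_reachable_of_right rfl).symm
  · rcases eq_or_eq_or_exists_coe (v := v) (u := u) x with h | h | ⟨w, rfl⟩
    · rw [h, hφv]; rfl
    · rw [h, hφu]; exact unionGraph_reachable_of_right hσv
    · rw [hφ_coe]; exact hH (ConnectedComponent.exact (H.connectedComponentMk w).out_eq)
  · rintro (_ | c)
    · exact hφv
    · rw [Option.elim_some, hφ_coe]
      exact congrArg some c.out_eq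

theorem unionGraph_reachable_apply_of_shortcut (a : {x // x ≠ v ∧ x ≠ u})
    (hfv : f v = a) (hfa : f a = v) (hfu : f u = g a) (hfga : f (g a) = u)
    (hfg : ∀ w, w ≠ a → w ≠ g a → f w = g w) (hgga : g (g a) = a)
    (hσv : σ v = u) (hσu : σ u = v) (w : {x // x ≠ v ∧ x ≠ u}) :
    (unionGraph f σ).Reachable w (g w) := by
  by_cases hwa : w = a
  · subst hwa
    exact (unionGraph_reachable_of_left hfa).trans <| (unionGraph_reachable_of_right hσv).trans
      (unionGraph_reachable_of_left hfu)
  by_cases hwga : w = g a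
  · subst hwga
    rw [hgga]
    exact (unionGraph_reachable_of_left hfga).trans <| (unionGraph_reachable_of_right hσu).trans
      (unionGraph_reachable_of_left hfv)
  exact unionGraph_reachable_of_left (hfg w hwa hwga)

/-- The path `a – v – u – g a` of `f ∪ σ` becomes the edge `a – g a` of `g ∪ s`. -/
theorem card_unionGraph_eq_of_shortcut (hvu : v ≠ u) (a : {x // x ≠ v ∧ x ≠ u})
    (hfv : f v = a) (hfa : f a = v) (hfu : f u = g a) (hfga : f (g a) = u)
    (hfg : ∀ w, w ≠ a → w ≠ g a → f w = g w) (hgga : g (g a) = a)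
    (hσv : σ v = u) (hσu : σ u = v) (hs : ∀ w : {x // x ≠ v ∧ x ≠ u}, σ w = s w) :
    Nat.card (unionGraph f σ).ConnectedComponent
      = Nat.card (unionGraph g s).ConnectedComponent := by
  classical
  set H := unionGraph g s
  let r : Y → {x // x ≠ v ∧ x ≠ u} := fun x =>
    if hx : x ≠ v ∧ x ≠ u then ⟨x, hx⟩ else if x = v then a else g a
  have hr_coe (w : {x // x ≠ v ∧ x ≠ u}) : r w = w := dif_pos w.2
  have hrv : r v = a := by simp [r]
  have hru : r u = g a := by simp [r, hvu.symm]
  have hH {w w'} : H.Reachable w w' → (unionGraph f σ).Reachable w w' :=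
    reachable_of_unionGraph_reachable Subtype.val
      (unionGraph_reachable_apply_of_shortcut a hfv hfa hfu hfga hfg hgga hσv hσu)
      (fun w => unionGraph_reachable_of_right (hs w))
  refine SimpleGraph.card_connectedComponent_eq_of_section (H.connectedComponentMk ∘ r)
    (fun c => (c.out : Y))
    (fun x y => apply_eq_of_unionGraph_reachable _ (fun x => ?_) (fun x => ?_)) (fun x => ?_)
    (fun c => by simp only [Function.comp_apply, hr_coe]; exact c.out_eq)
  · simp only [Function.comp_apply]
    rcases eq_or_eq_or_exists_coe (v := v) (u := u) x with h | h | ⟨w, rfl⟩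
    · rw [h, hfv, hr_coe, hrv]
    · rw [h, hfu, hr_coe, hru]
    by_cases hwa : w = a
    · rw [hwa, hfa, hrv, hr_coe]
    by_cases hwga : w = g a
    · rw [hwga, hfga, hru, hr_coe]
    rw [hfg w hwa hwga, hr_coe, hr_coe, ConnectedComponent.eq]
    exact (unionGraph_reachable_of_left rfl).symm
  · simp only [Function.comp_apply]
    rcases eq_or_eq_or_exists_coe (v := v) (u := u) x with h | h | ⟨w, rfl⟩
    · rw [h, hσv, hru, hrv, ConnectedComponent.eq]
      exact (unionGraph_reachable_of_left rfl).symm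
    · rw [h, hσu, hru, hrv, ConnectedComponent.eq]
      exact unionGraph_reachable_of_left rfl
    · rw [hs, hr_coe, hr_coe, ConnectedComponent.eq]
      exact (unionGraph_reachable_of_right rfl).symm
  · refine (hH (ConnectedComponent.exact (H.connectedComponentMk (r x)).out_eq)).trans ?_
    rcases eq_or_eq_or_exists_coe (v := v) (u := u) x with h | h | ⟨w, rfl⟩
    · rw [h, hrv]; exact unionGraph_reachable_of_left hfa
    · rw [h, hru]; exact unionGraph_reachable_of_left hfga
    · rw [hr_coe]

theorem card_unionGraph_swap_mul_addPair_mul_swap [DecidableEq Y] (hvu : v ≠ u)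
    (hg : IsPerfectMatching g) (a : {x // x ≠ v ∧ x ≠ u}) (hσv : σ v = u) (hσu : σ u = v)
    (hs : ∀ w : {x // x ≠ v ∧ x ≠ u}, σ w = s w) :
    Nat.card (unionGraph (swap (a : Y) u * addPair v u g * swap (a : Y) u) σ).ConnectedComponent
      = Nat.card (unionGraph g s).ConnectedComponent := by
  have hne {w w' : {x // x ≠ v ∧ x ≠ u}} (h : w ≠ w') : (w : Y) ≠ w' := Subtype.val_injective.ne h
  have hga : g a ≠ a := hg.2 a
  have hτv : swap (a : Y) u v = v := swap_apply_of_ne_of_ne a.2.1.symm hvu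
  refine card_unionGraph_eq_of_shortcut hvu a ?_ ?_ ?_ ?_ (fun w hwa hwga => ?_) (hg.1 a) hσv hσu hs
  · simp [hτv]
  · simp [hτv]
  · simp [swap_apply_of_ne_of_ne (hne hga) (g a).2.2]
  · simp [swap_apply_of_ne_of_ne (hne hga) (g a).2.2, hg.1 a]
  · have hgwa : g w ≠ a := fun h => hwga (by rw [← h, hg.1])
    simp [swap_apply_of_ne_of_ne (hne hwa) w.2.2, swap_apply_of_ne_of_ne (hne hgwa) (g w).2.2]

end surgery

section sum

variable [Fintype Y] [DecidableEq Y] {R : Type*} [CommSemiring R] (D : R) {σ : Perm Y}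

theorem sum_pow_card_unionGraph_filter_apply_eq (hσ : IsPerfectMatching σ) {v : Y}
    (s : Perm {x // x ≠ v ∧ x ≠ σ v}) (hs : ∀ w : {x // x ≠ v ∧ x ≠ σ v}, σ w = s w)
    {a : Y} (hav : a ≠ v) :
    ∑ f ∈ univ.filter (fun f => IsPerfectMatching f ∧ f v = a),
        D ^ Nat.card (unionGraph f σ).ConnectedComponent
      = (if a = σ v then D else 1) *
        ∑ g ∈ univ.filter IsPerfectMatching, D ^ Nat.card (unionGraph g s).ConnectedComponent := by
  have hvσv : v ≠ σ v := (hσ.2 v).symm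
  rw [mul_sum]
  by_cases hau : a = σ v
  · subst hau
    rw [sum_filter_apply_eq_sum_addPair hvσv]
    refine sum_congr rfl fun g _ => ?_
    rw [card_unionGraph_eq_add_one (addPair_apply_left g) (addPair_apply_right g)
      (addPair_apply_coe g) rfl (hσ.1 v) hs, pow_succ, if_pos rfl, mul_comm]
  · -- conjugating by `swap a (σ v)` moves the partner of `v` from `a` to `σ v`
    have hτv : swap a (σ v) v = v := swap_apply_of_ne_of_ne hav.symm hvσv
    rw [sum_filter_apply_eq_sum_conj _ hτv, swap_apply_left, sum_filter_apply_eq_sum_addPair hvσv]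
    refine sum_congr rfl fun g hg => ?_
    rw [swap_inv, if_neg hau, one_mul, card_unionGraph_swap_mul_addPair_mul_swap
      (a := ⟨a, hav, hau⟩) hvσv (mem_filter.1 hg).2 rfl (hσ.1 v) hs]

theorem sum_erase_ite_eq {v u : Y} (hvu : v ≠ u) :
    ∑ a ∈ univ.erase v, (if a = u then D else 1) = D + Fintype.card {x // x ≠ v ∧ x ≠ u} := by
  have hW : (univ.erase v).filter (· ≠ u) = univ.filter fun x => x ≠ v ∧ x ≠ u := by
    ext; simp [and_comm]
  rw [sum_ite, sum_const, sum_const, filter_eq', if_pos (mem_erase.2 ⟨hvu.symm, mem_univ u⟩),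
    hW, Fintype.card_subtype]
  simp

theorem sum_pow_card_unionGraph_eq_mul (hσ : IsPerfectMatching σ) {v : Y}
    (s : Perm {x // x ≠ v ∧ x ≠ σ v}) (hs : ∀ w : {x // x ≠ v ∧ x ≠ σ v}, σ w = s w) :
    ∑ f ∈ univ.filter IsPerfectMatching, D ^ Nat.card (unionGraph f σ).ConnectedComponent
      = (D + Fintype.card {x // x ≠ v ∧ x ≠ σ v}) *
        ∑ g ∈ univ.filter IsPerfectMatching, D ^ Nat.card (unionGraph g s).ConnectedComponent := by
  rw [← sum_fiberwise_of_maps_to (g := fun f => f v) (t := univ.erase v)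
    fun f hf => mem_erase.2 ⟨(mem_filter.1 hf).2.2 v, mem_univ _⟩]
  simp_rw [filter_filter]
  rw [sum_congr rfl fun a ha =>
      sum_pow_card_unionGraph_filter_apply_eq D hσ s hs (ne_of_mem_erase ha),
    ← sum_mul, sum_erase_ite_eq D (hσ.2 v).symm]

theorem card_subtype_ne_and_ne {v u : Y} (hvu : v ≠ u) :
    Fintype.card {x // x ≠ v ∧ x ≠ u} = Fintype.card Y - 2 := by
  rw [Fintype.card_subtype, ← card_univ, ← card_pair hvu, ← card_sdiff_of_subset (subset_univ _)]
  congr 1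
  ext
  simp

theorem sum_pow_card_unionGraph (n : ℕ) (hσ : IsPerfectMatching σ)
    (hY : Fintype.card Y = 2 * n) :
    ∑ f ∈ univ.filter IsPerfectMatching, D ^ Nat.card (unionGraph f σ).ConnectedComponent
      = ∏ j ∈ range n, (D + 2 * j) := by
  induction n generalizing Y with
  | zero =>
    have : IsEmpty Y := Fintype.card_eq_zero_iff.1 hY
    rw [filter_true_of_mem fun f _ => ⟨isEmptyElim, isEmptyElim⟩]
    simp
  | succ n ih =>
    obtain ⟨v⟩ : Nonempty Y := Fintype.card_pos_iff.1 (by omega)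
    have hW : Fintype.card {x // x ≠ v ∧ x ≠ σ v} = 2 * n := by
      rw [card_subtype_ne_and_ne (hσ.2 v).symm]; omega
    rw [sum_pow_card_unionGraph_eq_mul D hσ (σ.subtypePerm (apply_ne_and_ne_iff hσ.1 rfl))
      fun _ => rfl, ih (hσ.subtypePerm _) hW, hW, prod_range_succ, mul_comm]
    push_cast
    ring

end sum

end Equiv.Perm

theorem isPerfectMatching_finAddFlip (k : ℕ) :
    Equiv.Perm.IsPerfectMatching (finAddFlip : Equiv.Perm (Fin (k + k))) := by
  refine ⟨fun x => ?_, fun x => ?_⟩ <;> refine Fin.addCases (fun i => ?_) (fun i => ?_) x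
  all_goals simp only [finAddFlip_apply_castAdd, finAddFlip_apply_natAdd]
  all_goals simp [Fin.ext_iff, i.pos.ne']

/-- Identify perfect matchings of `[2k]` with fixed-point-free involutions `f` of
`Fin (k + k)`; the fixed matching `M₀ = {{1,k+1},…,{k,2k}}` is `finAddFlip`.
Then `∑_M D^{cc(M ∪ M₀)} = (D + 2k-2)(D + 2k-4) ⋯ (D+2) D = ∏_{j=0}^{k-1} (D + 2j)`,
where `cc(M ∪ M₀)` is the number of connected components of the graph whose edges
are those of `M` and of `M₀`. -/
theorem stmt6 (k : ℕ) (D : ℝ) :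
    ∑ f ∈ Finset.univ.filter
        (fun f : Equiv.Perm (Fin (k + k)) => (∀ x, f (f x) = x) ∧ ∀ x, f x ≠ x),
      D ^ Nat.card
        (SimpleGraph.fromRel fun x y => f x = y ∨ finAddFlip x = y).ConnectedComponent
      = ∏ j ∈ Finset.range k, (D + 2 * j) := by
  convert Equiv.Perm.sum_pow_card_unionGraph D k (isPerfectMatching_finAddFlip k)
    (by simp [two_mul]) using 3 <;> rfl
end

section
/- For all real $\theta$ with $|\theta| \le \pi$: $(2\sin(\theta/2))^2 \le \theta^2 \le (2\sin(\theta/2))^2 + (2\sin(\theta/2))^4$. -/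
/-!
With `x = θ / 2` and `s = sin x`, the lower bound is `|sin x| ≤ |x|`. For the upper bound,
`x ≤ tan x` on `[0, π/2)` gives `x² cos² x ≤ s²`, i.e. `x² ≤ s² + x² s²`, and Jordan's
inequality `2|x|/π ≤ |s|` bounds the error term: `x² s² ≤ 4 s⁴`.
-/

namespace Real

variable {x : ℝ}

lemma mul_cos_le_sin (h₀ : 0 ≤ x) (h₁ : x ≤ π / 2) : x * cos x ≤ sin x := by
  rcases h₁.lt_or_eq with h₁ | rfl
  · have hcos : 0 < cos x := cos_pos_of_mem_Ioo ⟨by linarith [pi_pos], h₁⟩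
    simpa [tan_eq_sin_div_cos, le_div_iff₀ hcos] using le_tan h₀ h₁
  · simp

lemma abs_mul_cos_le_abs_sin (hx : |x| ≤ π / 2) : |x| * cos x ≤ |sin x| := by
  rcases le_total 0 x with h₀ | h₀
  · rw [abs_of_nonneg h₀]
    exact (mul_cos_le_sin h₀ (by rwa [abs_of_nonneg h₀] at hx)).trans (le_abs_self _)
  · rw [abs_of_nonpos h₀]
    have := mul_cos_le_sin (x := -x) (by linarith) (by rwa [abs_of_nonpos h₀] at hx)
    rw [cos_neg, sin_neg] at this
    exact this.trans (neg_le_abs _)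

lemma sq_mul_cos_sq_le_sin_sq (hx : |x| ≤ π / 2) : x ^ 2 * cos x ^ 2 ≤ sin x ^ 2 := by
  have hcos : 0 ≤ cos x := cos_nonneg_of_mem_Icc (abs_le.mp hx)
  simpa [mul_pow] using pow_le_pow_left₀ (by positivity) (abs_mul_cos_le_abs_sin hx) 2

lemma sq_le_four_mul_sin_sq (hx : |x| ≤ π / 2) : x ^ 2 ≤ 4 * sin x ^ 2 := by
  have hjordan := mul_abs_le_abs_sin hx
  have hπ : 2 / π * |x| ≥ |x| / 2 := by
    rw [div_mul_eq_mul_div, ge_iff_le, div_le_div_iff₀ two_pos pi_pos]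
    nlinarith [pi_le_four, abs_nonneg x]
  have habs : |x| ≤ |2 * sin x| := by rw [abs_mul, abs_two]; linarith
  simpa [mul_pow, show (2 : ℝ) ^ 2 = 4 by norm_num] using sq_le_sq.mpr habs

lemma sq_le_sin_sq_add_four_mul_sin_pow_four (hx : |x| ≤ π / 2) :
    x ^ 2 ≤ sin x ^ 2 + 4 * sin x ^ 4 := by
  have hcos : x ^ 2 * (1 - sin x ^ 2) ≤ sin x ^ 2 := by
    rw [← cos_sq']; exact sq_mul_cos_sq_le_sin_sq hx
  nlinarith [mul_le_mul_of_nonneg_right (sq_le_four_mul_sin_sq hx) (sq_nonneg (sin x))]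

end Real

/-- For `|θ| ≤ π`: `(2 sin(θ/2))² ≤ θ² ≤ (2 sin(θ/2))² + (2 sin(θ/2))⁴`. -/
theorem stmt8 (θ : ℝ) (h : |θ| ≤ Real.pi) :
    (2 * Real.sin (θ / 2)) ^ 2 ≤ θ ^ 2 ∧
      θ ^ 2 ≤ (2 * Real.sin (θ / 2)) ^ 2 + (2 * Real.sin (θ / 2)) ^ 4 := by
  have hx : |θ / 2| ≤ Real.pi / 2 := by rw [abs_div, abs_two]; linarith
  have hθ : θ ^ 2 = 4 * (θ / 2) ^ 2 := by ring
  constructor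
  · nlinarith [Real.sin_sq_le_sq (x := θ / 2)]
  · nlinarith [Real.sq_le_sin_sq_add_four_mul_sin_pow_four hx]
end
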